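/- In the infinitesimal Hopf algebra of planar forests, the intersection Ker(Δ̃) ∩ Ker(Δ̃_↗) of the primitives for the left-admissible-cut coproduct and the primitives for the deconcatenation coproduct is exactly the one-dimensional span of the single-vertex tree •. -/

import Mathlib

open scoped TensorProduct

/-- Planar rooted trees; `PTree.node []` is the single-vertex tree `•`. -/
inductive PTree : Type
  | node : List PTree → PTree

/-- Planar rooted forests. -/
abbrev Forest : Type := List PTree

instance : Monoid Forest where
  mul := fun x y => List.append x y
  one := ([] : List PTree)
  mul_assoc := List.append_assoc
  one_mul := fun _ => rfl
  mul_one := List.append_nil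

/-- The infinitesimal Hopf algebra `H` of planar rooted forests. -/
abbrev H : Type := MonoidAlgebra ℚ Forest

/-- The basis element of `H` indexed by a forest. -/
noncomputable def bf (F : Forest) : H := MonoidAlgebra.of ℚ Forest F

/-- The operator `B⁺` grafting a forest on a common new root, extended linearly. -/
noncomputable def Bplus : H →ₗ[ℚ] H :=
  (Finsupp.lift H ℚ Forest fun F => bf [PTree.node F]) ∘ₗ
    (MonoidAlgebra.coeffLinearEquiv ℚ).toLinearMap

/-- The deconcatenation coproduct `Δ_↗(F) = Σ_{F_1·F_2 = F} F_1 ⊗ F_2`. -/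
noncomputable def Δd : H →ₗ[ℚ] H ⊗[ℚ] H :=
  (Finsupp.lift (H ⊗[ℚ] H) ℚ Forest fun F =>
    ∑ k ∈ Finset.range (F.length + 1), bf (F.take k) ⊗ₜ bf (F.drop k)) ∘ₗ
    (MonoidAlgebra.coeffLinearEquiv ℚ).toLinearMap

/-!
A `Δ_↗`-primitive `x` satisfies `x(F₁F₂) = x(F₁)ε(F₂) + ε(F₁)x(F₂)` on coefficients, so it
vanishes off the forests with exactly one tree and hence `x = B⁺(y)`. Comparing
`Δ(B⁺ y) = B⁺ y ⊗ 1 + (id ⊗ B⁺)(Δ y)` with `Δ`-primitivity and using that `id ⊗ B⁺` is injective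
gives `Δ y = 1 ⊗ y`; the counit identity `(id ⊗ ε) ∘ Δ = id` then forces `y = ε(y) · 1`, so
`x` is a multiple of `B⁺(1) = •`.
-/

lemma List.take_eq_and_drop_eq_iff {α : Type*} {l l₁ l₂ : List α} {k : ℕ} (hk : k ≤ l.length) :
    l.take k = l₁ ∧ l.drop k = l₂ ↔ k = l₁.length ∧ l = l₁ ++ l₂ := by
  constructor
  · rintro ⟨rfl, rfl⟩
    exact ⟨(List.length_take_of_le hk).symm, (List.take_append_drop k l).symm⟩
  · rintro ⟨rfl, rfl⟩
    exact ⟨List.take_left, List.drop_left⟩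

lemma List.sum_range_ite_take_drop {α R : Type*} [AddCommMonoidWithOne R] [DecidableEq α]
    (l l₁ l₂ : List α) :
    ∑ k ∈ Finset.range (l.length + 1), (if l.take k = l₁ ∧ l.drop k = l₂ then (1 : R) else 0) =
      if l = l₁ ++ l₂ then 1 else 0 := by
  have hterm : ∀ k ∈ Finset.range (l.length + 1),
      (if l.take k = l₁ ∧ l.drop k = l₂ then (1 : R) else 0) =
        if k = l₁.length then (if l = l₁ ++ l₂ then 1 else 0) else 0 := fun k hk => by
    rw [← ite_and, if_congr (List.take_eq_and_drop_eq_iff (by simpa [Nat.lt_succ_iff] using hk))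
      rfl rfl]
  rw [Finset.sum_congr rfl hterm, Finset.sum_ite_eq']
  by_cases happ : l = l₁ ++ l₂ <;> simp [happ]

lemma Forest.mul_def (F G : Forest) : F * G = F ++ G := rfl

lemma bf_nil : bf [] = 1 := rfl

lemma bf_append (F G : Forest) : bf (F ++ G) = bf F * bf G :=
  map_mul (MonoidAlgebra.of ℚ Forest) F G

lemma Bplus_bf (F : Forest) : Bplus (bf F) = bf [PTree.node F] := by
  simp [Bplus, bf]

lemma coeff_bf (F : Forest) : (bf F).coeff = Finsupp.single F 1 := by
  simp [bf]

def graft (F : Forest) : Forest := [PTree.node F]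

lemma graft_injective : Function.Injective graft := fun _ _ h => by simpa [graft] using h

lemma Bplus_eq_mapDomain : Bplus = MonoidAlgebra.mapDomainLinearMap ℚ ℚ graft := by
  ext F : 2
  simp [Bplus, bf, graft]

lemma Bplus_injective : Function.Injective Bplus := by
  rw [Bplus_eq_mapDomain]
  exact MonoidAlgebra.mapDomain_injective graft_injective

lemma exists_Bplus_eq {x : H} (hx : ∀ F : Forest, F.length ≠ 1 → x.coeff F = 0) :
    ∃ y, Bplus y = x := by
  have hsupp : ↑x.coeff.support ⊆ Set.range graft := by
    intro F hF
    match F, hF with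
    | [PTree.node L], _ => exact ⟨L, rfl⟩
    | [], hF => exact absurd (hx [] (by simp)) (Finsupp.mem_support_iff.mp hF)
    | _ :: _ :: _, hF => exact absurd (hx _ (by simp)) (Finsupp.mem_support_iff.mp hF)
  rw [Bplus_eq_mapDomain]
  exact ⟨_, MonoidAlgebra.mapDomain_comapDomain hsupp graft_injective⟩

lemma Δd_bf (F : Forest) :
    Δd (bf F) = ∑ k ∈ Finset.range (F.length + 1), bf (F.take k) ⊗ₜ bf (F.drop k) := by
  simp [Δd, bf]

noncomputable def tensorBasis : Module.Basis (Forest × Forest) ℚ (H ⊗[ℚ] H) :=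
  (MonoidAlgebra.basis Forest ℚ).tensorProduct (MonoidAlgebra.basis Forest ℚ)

lemma tensorBasis_repr_tmul (a b : H) (F₁ F₂ : Forest) :
    tensorBasis.repr (a ⊗ₜ b) (F₁, F₂) = a.coeff F₁ * b.coeff F₂ :=
  (Module.Basis.tensorProduct_repr_tmul_apply _ _ a b F₁ F₂).trans (mul_comm _ _)

lemma tensorBasis_repr_Δd (x : H) (F₁ F₂ : Forest) :
    tensorBasis.repr (Δd x) (F₁, F₂) = x.coeff (F₁ ++ F₂) := by
  classical
  induction x using MonoidAlgebra.induction_linear with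
  | zero => simp
  | add x y hx hy => simp [hx, hy]
  | single F c =>
    rw [← MonoidAlgebra.smul_of, ← bf, map_smul, map_smul, Finsupp.smul_apply, Δd_bf, map_sum,
      Finsupp.finsetSum_apply]
    simp only [tensorBasis_repr_tmul, coeff_bf, Finsupp.single_apply, ite_zero_mul_ite_zero,
      mul_one, List.sum_range_ite_take_drop, MonoidAlgebra.coeff_smul, Finsupp.smul_apply]

def IsPrimitive (D : H →ₗ[ℚ] H ⊗[ℚ] H) (x : H) : Prop := D x = x ⊗ₜ 1 + 1 ⊗ₜ x

lemma IsPrimitive.smul {D : H →ₗ[ℚ] H ⊗[ℚ] H} {x : H} (h : IsPrimitive D x) (c : ℚ) :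
    IsPrimitive D (c • x) := by
  rw [IsPrimitive, map_smul, h, smul_add, TensorProduct.smul_tmul', TensorProduct.tmul_smul]

lemma isPrimitive_Δd_dot : IsPrimitive Δd (bf [PTree.node []]) := by
  simp [IsPrimitive, Δd_bf, Finset.sum_range_succ, bf_nil, add_comm]

lemma IsPrimitive.coeff_eq_zero_of_length_ne_one {x : H} (h : IsPrimitive Δd x) {F : Forest}
    (hF : F.length ≠ 1) : x.coeff F = 0 := by
  have hsplit (F₁ F₂ : Forest) :
      x.coeff (F₁ ++ F₂) = x.coeff F₁ * (1 : H).coeff F₂ + (1 : H).coeff F₁ * x.coeff F₂ := by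
    rw [← tensorBasis_repr_Δd, h, map_add, Finsupp.add_apply, tensorBasis_repr_tmul,
      tensorBasis_repr_tmul]
  match F, hF with
  | [], _ => simpa [← bf_nil, coeff_bf] using hsplit [] []
  | a :: b :: l, _ => simpa [← bf_nil, coeff_bf] using hsplit [a] (b :: l)

/-- `0 ^ F.length` is the indicator of the empty forest. -/
def emptyIndicator : Forest →* ℚ where
  toFun F := 0 ^ F.length
  map_one' := pow_zero 0
  map_mul' F G := by rw [Forest.mul_def, List.length_append, pow_add]

noncomputable def counit : H →ₐ[ℚ] ℚ := MonoidAlgebra.lift ℚ ℚ Forest emptyIndicator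

lemma counit_Bplus (y : H) : counit (Bplus y) = 0 := by
  induction y using MonoidAlgebra.induction_linear with
  | zero => simp
  | add y z hy hz => simp [hy, hz]
  | single F c =>
    rw [← MonoidAlgebra.smul_of, ← bf, map_smul, Bplus_bf]
    simp [counit, bf, emptyIndicator]

noncomputable def idCounit : H ⊗[ℚ] H →ₐ[ℚ] H :=
  (Algebra.TensorProduct.rid ℚ ℚ H).toAlgHom.comp
    (Algebra.TensorProduct.map (AlgHom.id ℚ H) counit)

lemma idCounit_tmul (a b : H) : idCounit (a ⊗ₜ b) = counit b • a := by
  simp [idCounit]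

lemma idCounit_lTensor_Bplus (T : H ⊗[ℚ] H) : idCounit (LinearMap.lTensor H Bplus T) = 0 := by
  induction T with
  | zero => simp
  | tmul a b => simp [idCounit_tmul, counit_Bplus]
  | add T U hT hU => simp [hT, hU]

section Coproduct

variable {Δ : H →ₗ[ℚ] H ⊗[ℚ] H}

lemma Δ_eq_one_tmul_of_isPrimitive_Bplus
    (hΔB : ∀ x : H, Δ (Bplus x) = (Bplus x) ⊗ₜ 1 + (LinearMap.lTensor H Bplus) (Δ x))
    {y : H} (h : IsPrimitive Δ (Bplus y)) : Δ y = 1 ⊗ₜ y := by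
  apply Module.Flat.lTensor_preserves_injective_linearMap (M := H) Bplus Bplus_injective
  rw [LinearMap.lTensor_tmul]
  exact add_left_cancel ((hΔB y).symm.trans h)

lemma isPrimitive_Δ_dot (hΔ1 : Δ 1 = 1 ⊗ₜ 1)
    (hΔB : ∀ x : H, Δ (Bplus x) = (Bplus x) ⊗ₜ 1 + (LinearMap.lTensor H Bplus) (Δ x)) :
    IsPrimitive Δ (bf [PTree.node []]) := by
  rw [IsPrimitive, ← bf_nil, ← Bplus_bf, hΔB, bf_nil, hΔ1, LinearMap.lTensor_tmul]

lemma idCounit_Δ_Bplus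
    (hΔB : ∀ x : H, Δ (Bplus x) = (Bplus x) ⊗ₜ 1 + (LinearMap.lTensor H Bplus) (Δ x))
    (y : H) : idCounit (Δ (Bplus y)) = Bplus y := by
  rw [hΔB, map_add, idCounit_lTensor_Bplus, idCounit_tmul, map_one, one_smul, add_zero]

lemma idCounit_Δ_mul
    (hΔm : ∀ x y : H, Δ (x * y) = (x ⊗ₜ (1 : H)) * Δ y + Δ x * ((1 : H) ⊗ₜ y) - x ⊗ₜ y)
    {x y : H} (hx : idCounit (Δ x) = x) (hy : idCounit (Δ y) = y) :
    idCounit (Δ (x * y)) = x * y := by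
  rw [hΔm, map_sub, map_add, map_mul, map_mul, hx, hy, idCounit_tmul, idCounit_tmul,
    idCounit_tmul, map_one, one_smul, mul_smul_one, add_sub_cancel_right]

lemma idCounit_Δ (hΔ1 : Δ 1 = 1 ⊗ₜ 1)
    (hΔm : ∀ x y : H, Δ (x * y) = (x ⊗ₜ (1 : H)) * Δ y + Δ x * ((1 : H) ⊗ₜ y) - x ⊗ₜ y)
    (hΔB : ∀ x : H, Δ (Bplus x) = (Bplus x) ⊗ₜ 1 + (LinearMap.lTensor H Bplus) (Δ x))
    (x : H) : idCounit (Δ x) = x := by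
  have hbf (F : Forest) : idCounit (Δ (bf F)) = bf F := by
    induction F with
    | nil => rw [bf_nil, hΔ1, idCounit_tmul, map_one, one_smul]
    | cons t F ih =>
      obtain ⟨L⟩ := t
      rw [← List.singleton_append, bf_append, ← Bplus_bf]
      exact idCounit_Δ_mul hΔm (idCounit_Δ_Bplus hΔB _) ih
  induction x using MonoidAlgebra.induction_linear with
  | zero => simp
  | add x y hx hy => simp [hx, hy]
  | single F c => rw [← MonoidAlgebra.smul_of, ← bf, map_smul, map_smul, hbf]

end Coproduct

/-- For the left-admissible-cut coproduct `Δ` of `H`, an element is primitive for both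
`Δ` and the deconcatenation coproduct `Δ_↗` if and only if it is a scalar multiple of
the single-vertex tree `•`: `Ker(Δ̃) ∩ Ker(Δ̃_↗) = K·•`. -/
theorem primitives_intersection (Δ : H →ₗ[ℚ] H ⊗[ℚ] H)
    (hΔ1 : Δ 1 = 1 ⊗ₜ 1)
    (hΔm : ∀ x y : H, Δ (x * y) = (x ⊗ₜ (1 : H)) * Δ y + Δ x * ((1 : H) ⊗ₜ y) - x ⊗ₜ y)
    (hΔB : ∀ x : H, Δ (Bplus x) = (Bplus x) ⊗ₜ 1 + (LinearMap.lTensor H Bplus) (Δ x)) :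
    ∀ x : H,
      (Δ x = x ⊗ₜ 1 + 1 ⊗ₜ x ∧ Δd x = x ⊗ₜ 1 + 1 ⊗ₜ x) ↔
        ∃ c : ℚ, x = c • bf [PTree.node []] := by
  intro x
  change IsPrimitive Δ x ∧ IsPrimitive Δd x ↔ _
  constructor
  · rintro ⟨hΔx, hΔdx⟩
    obtain ⟨y, rfl⟩ := exists_Bplus_eq fun F => hΔdx.coeff_eq_zero_of_length_ne_one
    have hy : Δ y = 1 ⊗ₜ y := Δ_eq_one_tmul_of_isPrimitive_Bplus hΔB hΔx
    obtain ⟨c, rfl⟩ : ∃ c : ℚ, y = c • 1 :=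
      ⟨counit y, by simpa [hy, idCounit_tmul] using (idCounit_Δ hΔ1 hΔm hΔB y).symm⟩
    exact ⟨c, by rw [map_smul, ← bf_nil, Bplus_bf]⟩
  · rintro ⟨c, rfl⟩
    exact ⟨(isPrimitive_Δ_dot hΔ1 hΔB).smul c, isPrimitive_Δd_dot.smul c⟩
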